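/- Let F be a finite extension of ℚ_p with ring of integers O_F and uniformizer π, let V be a free O_F-module of finite rank with valuation ν defined via a basis, and let ⟨,⟩ : V_F × V_F → F be a symmetric F-bilinear pairing on V_F = V ⊗ F. Define, for a subspace V₁ ⊆ V_F, d(V₁) = min{ ν(Y) : Y ∈ V₁, ⟨Z,Y⟩ ∈ O_F for all Z ∈ V }, and d = max over subspaces V₁ of d(V₁). If d ≤ 0 (depth at most zero), then every Y ∈ V_F with ν(Y) ≥ 0 satisfies ⟨Z, Y⟩ ∈ O_F for all Z ∈ V. -/

import Mathlib

open scoped Classical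

/-!
Integrality of pairing with the lattice is preserved under scaling by `O`. Given `Y ≠ 0` with
`ν Y ≥ 0`, the line `F ∙ Y` contains an integral vector `c • Y` with `ν (c • Y) = d(F ∙ Y) ≤ d ≤ 0`.
Since `ν (c • Y) = ν c + ν Y`, this forces `ν c ≤ 0`, so `c⁻¹ ∈ O` and `Y = c⁻¹ • (c • Y)` is
integral as well.
-/

section Valuation

variable {F : Type*} [Field F] (O : Subring F) (ν : F → ℤ)
  (hνmul : ∀ x y : F, x ≠ 0 → y ≠ 0 → ν (x * y) = ν x + ν y)
include hνmul

theorem val_one_of_mul : ν 1 = 0 := by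
  have h := hνmul 1 1 one_ne_zero one_ne_zero
  rw [mul_one] at h
  omega

theorem val_inv_of_mul {c : F} (hc : c ≠ 0) : ν c⁻¹ = -ν c := by
  have h := hνmul c c⁻¹ hc (inv_ne_zero hc)
  rw [mul_inv_cancel₀ hc, val_one_of_mul ν hνmul] at h
  omega

theorem inv_mem_of_val_nonpos (hνO : ∀ x : F, x ≠ 0 → (x ∈ O ↔ 0 ≤ ν x)) {c : F}
    (hc : c ≠ 0) (hνc : ν c ≤ 0) : c⁻¹ ∈ O := by
  rw [hνO _ (inv_ne_zero hc), val_inv_of_mul ν hνmul hc]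
  omega

end Valuation

section CoordVal

variable {F W ι : Type*} [Field F] [AddCommGroup W] [Module F W] [Fintype ι]

noncomputable def coordVal (ν : F → ℤ) (b : Module.Basis ι F W) (x : W) : WithTop ℤ :=
  Finset.univ.inf fun i => if b.repr x i = 0 then (⊤ : WithTop ℤ) else (ν (b.repr x i) : WithTop ℤ)

theorem coordVal_zero (ν : F → ℤ) (b : Module.Basis ι F W) : coordVal ν b 0 = ⊤ := by
  simp [coordVal]

theorem coordVal_smul (ν : F → ℤ) (hνmul : ∀ x y : F, x ≠ 0 → y ≠ 0 → ν (x * y) = ν x + ν y)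
    (b : Module.Basis ι F W) {c : F} (hc : c ≠ 0) (x : W) :
    coordVal ν b (c • x) = ν c + coordVal ν b x := by
  rw [coordVal, coordVal, Finset.apply_inf_eq_inf_comp ((ν c : WithTop ℤ) + ·)
    (fun s t => (min_add_add_left _ s t).symm) (WithTop.add_top _)]
  refine Finset.inf_congr rfl fun i _ => ?_
  by_cases hxi : b.repr x i = 0
  · simp [hxi]
  · simp [hxi, hc, hνmul c _ hc hxi]

end CoordVal

theorem nonpos_of_coe_add_le_zero {k : ℤ} {t : WithTop ℤ} (h : (k : WithTop ℤ) + t ≤ 0)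
    (ht : 0 ≤ t) : k ≤ 0 := by
  induction t with
  | top => simp at h
  | coe m =>
    norm_cast at h ht
    omega

theorem pairing_smul_mem {F W : Type*} [Field F] [AddCommGroup W] [Module F W]
    (O : Subring F) (B : W →ₗ[F] W →ₗ[F] F) {S : Set W} {Y : W}
    (hY : ∀ Z ∈ S, B Z Y ∈ O) {a : F} (ha : a ∈ O) : ∀ Z ∈ S, B Z (a • Y) ∈ O := by
  intro Z hZ
  rw [map_smul, smul_eq_mul]
  exact O.mul_mem ha (hY Z hZ)

theorem stmt_4_general (F : Type*) [Field F]
    (O : Subring F)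
    (ν : F → ℤ)
    (hνmul : ∀ x y : F, x ≠ 0 → y ≠ 0 → ν (x * y) = ν x + ν y)
    (hνO : ∀ x : F, x ≠ 0 → (x ∈ O ↔ 0 ≤ ν x))
    (dim : ℕ) (W : Type*) [AddCommGroup W] [Module F W]
    (b : Module.Basis (Fin dim) F W)
    (νW : W → WithTop ℤ)
    (hνW : ∀ x : W, νW x = Finset.univ.inf fun i =>
        if b.repr x i = 0 then (⊤ : WithTop ℤ) else (ν (b.repr x i) : WithTop ℤ))
    (B : W →ₗ[F] W →ₗ[F] F)
    -- `Int Y` := `Y` pairs integrally with the lattice `V`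
    (Int : W → Prop)
    (hInt : ∀ Y : W, Int Y ↔ ∀ Z : W, (∀ i, b.repr Z i ∈ O) → B Z Y ∈ O)
    -- `dV V₁` is the minimum of `νW` over integral elements of `V₁`
    (dV : Submodule F W → ℤ)
    (hdVmin : ∀ V₁ : Submodule F W, V₁ ≠ ⊥ →
        (∃ Y ∈ V₁, Int Y ∧ νW Y = (dV V₁ : WithTop ℤ)) ∧
          ∀ Y ∈ V₁, Int Y → (dV V₁ : WithTop ℤ) ≤ νW Y)
    -- `d` is the maximum of the `dV V₁`
    (d : ℤ)
    (hdmax : (∀ V₁ : Submodule F W, V₁ ≠ ⊥ → dV V₁ ≤ d) ∧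
        ∃ V₁ : Submodule F W, V₁ ≠ ⊥ ∧ dV V₁ = d)
    (hd0 : d ≤ 0) :
    ∀ Y : W, (0 : WithTop ℤ) ≤ νW Y → Int Y := by
  have hνW' : νW = coordVal ν b := funext hνW
  subst hνW'
  intro Y hY
  simp only [hInt] at hdVmin ⊢
  by_cases hY0 : Y = 0
  · simp [hY0, O.zero_mem]
  have hline : Submodule.span F {Y} ≠ ⊥ := by simpa [Submodule.span_singleton_eq_bot] using hY0
  obtain ⟨⟨_, hmem, hcYInt, hcYval⟩, -⟩ := hdVmin _ hline
  obtain ⟨c, rfl⟩ := Submodule.mem_span_singleton.mp hmem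
  have hc : c ≠ 0 := by
    rintro rfl
    simp [coordVal_zero] at hcYval
  have hνc : ν c ≤ 0 := by
    refine nonpos_of_coe_add_le_zero (t := coordVal ν b Y) ?_ hY
    rw [← coordVal_smul ν hνmul b hc, hcYval]
    exact_mod_cast (hdmax.1 _ hline).trans hd0
  have hYeq : Y = c⁻¹ • c • Y := (inv_smul_smul₀ hc Y).symm
  rw [hYeq]
  exact pairing_smul_mem O B hcYInt (inv_mem_of_val_nonpos O ν hνmul hνO hc hνc)

/-- Let `F/ℚ_p` be finite, `O` its ring of integers, `π` a uniformizer,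
`ν` the normalized valuation, extended to a vector space `W` coordinatewise via an
`O`-basis `b` of the lattice `V = {x | all coordinates in O}`.  Let `B` be a symmetric
(non-degenerate) `F`-bilinear pairing on `W`.  For a nonzero subspace `V₁ ⊆ W` let
`dV V₁ = min { ν Y : Y ∈ V₁, ⟨Z,Y⟩ ∈ O for all Z ∈ V }` and let `d` be the maximum of
the `dV V₁`.  If `d ≤ 0`, then every `Y` with `ν Y ≥ 0` pairs integrally with the
lattice: `B Z Y ∈ O` for all `Z ∈ V`. -/
theorem stmt_4 {p : ℕ} [Fact p.Prime] (F : Type*) [Field F] [Algebra ℚ_[p] F]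
    [FiniteDimensional ℚ_[p] F]
    (O : Subring F) (π : F) (hπ0 : π ≠ 0) (hπO : π ∈ O)
    (ν : F → ℤ) (hνπ : ν π = 1)
    (hνmul : ∀ x y : F, x ≠ 0 → y ≠ 0 → ν (x * y) = ν x + ν y)
    (hνO : ∀ x : F, x ≠ 0 → (x ∈ O ↔ 0 ≤ ν x))
    (dim : ℕ) (W : Type*) [AddCommGroup W] [Module F W]
    (b : Module.Basis (Fin dim) F W)
    (νW : W → WithTop ℤ)
    (hνW : ∀ x : W, νW x = Finset.univ.inf fun i =>
        if b.repr x i = 0 then (⊤ : WithTop ℤ) else (ν (b.repr x i) : WithTop ℤ))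
    (B : W →ₗ[F] W →ₗ[F] F)
    (hsymm : ∀ x y : W, B x y = B y x)
    (hnondeg : ∀ x : W, (∀ y : W, B x y = 0) → x = 0)
    -- `Int Y` := `Y` pairs integrally with the lattice `V`
    (Int : W → Prop)
    (hInt : ∀ Y : W, Int Y ↔ ∀ Z : W, (∀ i, b.repr Z i ∈ O) → B Z Y ∈ O)
    -- `dV V₁` is the minimum of `νW` over integral elements of `V₁`
    (dV : Submodule F W → ℤ)
    (hdVmin : ∀ V₁ : Submodule F W, V₁ ≠ ⊥ →
        (∃ Y ∈ V₁, Int Y ∧ νW Y = (dV V₁ : WithTop ℤ)) ∧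
          ∀ Y ∈ V₁, Int Y → (dV V₁ : WithTop ℤ) ≤ νW Y)
    -- `d` is the maximum of the `dV V₁`
    (d : ℤ)
    (hdmax : (∀ V₁ : Submodule F W, V₁ ≠ ⊥ → dV V₁ ≤ d) ∧
        ∃ V₁ : Submodule F W, V₁ ≠ ⊥ ∧ dV V₁ = d)
    (hd0 : d ≤ 0) :
    ∀ Y : W, (0 : WithTop ℤ) ≤ νW Y → Int Y :=
  stmt_4_general F O ν hνmul hνO dim W b νW hνW B Int hInt dV hdVmin d hdmax hd0
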